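/- Let n ≥ 1 be an integer, τ > 0 a real number, and s₀ a real number. Then there exists a unique tuple of real numbers (a₀,…,a_{n−1}, b₀,…,b_{n−1}) such that the quasipolynomial Δ(s) = s^n + Σ_{k=0}^{n−1} a_k s^k + e^{−sτ} Σ_{k=0}^{n−1} b_k s^k has s₀ as a root of multiplicity at least 2n, i.e., Δ^{(k)}(s₀) = 0 for all 0 ≤ k ≤ 2n − 1. -/

import Mathlib

/-!
Write `Δ(s) = p(s) + e^{-τs} q(s)` with `p = X ^ n + ∑ aₖ Xᵏ` and `q = ∑ bₖ Xᵏ`. Differentiating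
`e^{-τs} q(s)` keeps the factor `e^{-τs}` and replaces `q` by `q' - τ q`, so the conditions
`Δ^{(k)}(s₀) = 0`, `k < 2n`, form a square linear system in the `2n` coefficients, and it suffices
to show that the homogeneous system only has the trivial solution.

In the homogeneous system `p` and `q` have degree `< n`, so the conditions with `k ≥ n` do not
involve `p`. They say that `r = (d/ds - τ)^n q`, again of degree `< n`, satisfies
`((d/ds - τ)^j r)(s₀) = 0` for `j < n`; expanding `d/ds = (d/ds - τ) + τ` binomially, all
derivatives of `r` of order `< n` vanish at `s₀`, hence `r = 0`, and `q = 0` because `d/ds - τ` is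
injective on polynomials when `τ ≠ 0`. The first `n` conditions then force `p = 0` in the same way.
-/

open Polynomial

lemma LinearMap.apply_pow_add_smul_one_eq_zero {R M N : Type*} [CommSemiring R]
    [AddCommMonoid M] [Module R M] [AddCommMonoid N] [Module R N]
    (φ : M →ₗ[R] N) (T : Module.End R M) (c : R) {n : ℕ} {x : M}
    (h : ∀ j < n, φ ((T ^ j) x) = 0) {j : ℕ} (hj : j < n) :
    φ (((T + c • 1) ^ j) x) = 0 := by
  rw [((Commute.one_right T).smul_right c).add_pow]
  simp only [LinearMap.sum_apply, map_sum]
  refine Finset.sum_eq_zero fun i hi => ?_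
  have hi : i < n := (Finset.mem_range_succ_iff.mp hi).trans_lt hj
  simp [_root_.smul_pow, Module.End.natCast_apply, Module.End.mul_apply, h i hi]

namespace Polynomial

theorem eq_zero_of_degree_lt_of_eval_iterate_derivative_eq_zero {K : Type*} [Field K]
    [CharZero K] {Q : K[X]} {n : ℕ} {s₀ : K} (hQ : Q.degree < n)
    (h : ∀ j < n, eval s₀ (derivative^[j] Q) = 0) : Q = 0 := by
  by_contra hQ0
  have hmult : n ≤ Q.rootMultiplicity s₀ := by
    cases n with
    | zero => exact Nat.zero_le _
    | succ n => exact lt_rootMultiplicity_of_isRoot_iterate_derivative hQ0 fun m hm => h m (by omega)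
  refine hQ0 (eq_zero_of_dvd_of_degree_lt ((le_rootMultiplicity_iff hQ0).mp hmult) ?_)
  rwa [degree_pow, degree_X_sub_C, nsmul_one]

/-- `d/ds - t`, the operator `q ↦ e^{ts} (d/ds) (e^{-ts} q)`. -/
noncomputable def twistedDerivative {R : Type*} [CommRing R] (t : R) : Module.End R R[X] :=
  derivative - t • 1

section CommRing

variable {R : Type*} [CommRing R] (t : R)

@[simp]
lemma twistedDerivative_apply (q : R[X]) :
    twistedDerivative t q = derivative q - t • q := rfl

lemma twistedDerivative_add_smul_one : twistedDerivative t + t • 1 = derivative := by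
  simp [twistedDerivative]

lemma degree_twistedDerivative_le (q : R[X]) : (twistedDerivative t q).degree ≤ q.degree :=
  (degree_sub_le _ _).trans (max_le degree_derivative_le (degree_smul_le t q))

lemma degree_twistedDerivative_pow_le (q : R[X]) (k : ℕ) :
    ((twistedDerivative t ^ k) q).degree ≤ q.degree := by
  induction k with
  | zero => rfl
  | succ k ih =>
    rw [pow_succ', Module.End.mul_apply]
    exact (degree_twistedDerivative_le t _).trans ih

end CommRing

section Field

variable {K : Type*} [Field K] {t : K}

lemma twistedDerivative_injective (ht : t ≠ 0) : Function.Injective (twistedDerivative t) := by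
  rw [← LinearMap.ker_eq_bot, LinearMap.ker_eq_bot']
  intro q hq
  by_contra hq0
  have hq' : derivative q = t • q := sub_eq_zero.mp hq
  have := degree_derivative_lt hq0
  rw [hq', smul_eq_C_mul, degree_C_mul ht] at this
  exact lt_irrefl _ this

theorem eq_zero_of_degree_lt_of_eval_twistedDerivative_pow_eq_zero [CharZero K] {Q : K[X]}
    {n : ℕ} {s₀ : K} (hQ : Q.degree < n)
    (h : ∀ j < n, eval s₀ ((twistedDerivative t ^ j) Q) = 0) : Q = 0 := by
  refine eq_zero_of_degree_lt_of_eval_iterate_derivative_eq_zero (s₀ := s₀) hQ fun j hj => ?_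
  have := (leval s₀).apply_pow_add_smul_one_eq_zero _ t h hj
  rwa [twistedDerivative_add_smul_one, Module.End.pow_apply] at this

end Field

lemma aeval_degreeLTEquiv_symm {R A : Type*} [CommSemiring R] [Semiring A] [Algebra R A] {n : ℕ}
    (a : Fin n → R) (x : A) :
    aeval x ((degreeLTEquiv R n).symm a : R[X]) = ∑ i, algebraMap R A (a i) * x ^ (i : ℕ) := by
  simp [degreeLTEquiv, aeval_monomial]

end Polynomial

lemma hasDerivAt_aeval_add_cexp_mul_aeval (τ : ℝ) (p q : ℝ[X]) (s : ℂ) :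
    HasDerivAt (fun s : ℂ => aeval s p + Complex.exp (-s * τ) * aeval s q)
      (aeval s (derivative p) + Complex.exp (-s * τ) * aeval s (twistedDerivative τ q)) s := by
  have hexp : HasDerivAt (fun s : ℂ => Complex.exp (-s * τ)) (Complex.exp (-s * τ) * -τ) s := by
    simpa using ((hasDerivAt_id s).neg.mul_const (τ : ℂ)).cexp
  refine ((p.hasDerivAt_aeval s).add (hexp.mul (q.hasDerivAt_aeval s))).congr_deriv ?_
  rw [twistedDerivative_apply, map_sub, map_smul, Complex.real_smul]
  ring

lemma iteratedDeriv_aeval_add_cexp_mul_aeval (τ : ℝ) (p q : ℝ[X]) (k : ℕ) :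
    iteratedDeriv k (fun s : ℂ => aeval s p + Complex.exp (-s * τ) * aeval s q) =
      fun s => aeval s (derivative^[k] p) +
        Complex.exp (-s * τ) * aeval s ((twistedDerivative τ ^ k) q) := by
  induction k generalizing p q with
  | zero => rfl
  | succ k ih =>
    rw [iteratedDeriv_succ', funext fun s => (hasDerivAt_aeval_add_cexp_mul_aeval τ p q s).deriv,
      ih, Function.iterate_succ_apply, pow_succ, Module.End.mul_apply]

lemma iteratedDeriv_aeval_add_cexp_mul_aeval_ofReal (τ s₀ : ℝ) (p q : ℝ[X]) (k : ℕ) :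
    iteratedDeriv k (fun s : ℂ => aeval s p + Complex.exp (-s * τ) * aeval s q) s₀ =
      ((eval s₀ (derivative^[k] p) +
        Real.exp (-s₀ * τ) * eval s₀ ((twistedDerivative τ ^ k) q) : ℝ) : ℂ) := by
  rw [iteratedDeriv_aeval_add_cexp_mul_aeval]
  push_cast
  simp only [← Complex.coe_algebraMap, aeval_algebraMap_apply_eq_algebraMap_eval]

section QuasiPolynomialJet

variable (n : ℕ) (τ s₀ : ℝ)

/-- The derivatives of order `< 2 * n` at `s₀` of `s ↦ p(s) + e^{-τs} q(s)`. -/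
noncomputable def quasiPolynomialJet : ℝ[X]_n × ℝ[X]_n →ₗ[ℝ] Fin (2 * n) → ℝ :=
  LinearMap.pi fun k => ((leval s₀ ∘ₗ derivative ^ (k : ℕ)).coprod
      (Real.exp (-s₀ * τ) • leval s₀ ∘ₗ twistedDerivative τ ^ (k : ℕ))) ∘ₗ
    (degreeLT ℝ n).subtype.prodMap (degreeLT ℝ n).subtype

lemma quasiPolynomialJet_apply (pq : ℝ[X]_n × ℝ[X]_n) (k : Fin (2 * n)) :
    quasiPolynomialJet n τ s₀ pq k = eval s₀ (derivative^[k] (pq.1 : ℝ[X])) +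
      Real.exp (-s₀ * τ) * eval s₀ ((twistedDerivative τ ^ (k : ℕ)) (pq.2 : ℝ[X])) := by
  simp [quasiPolynomialJet, Module.End.pow_apply]

variable {τ} in
lemma quasiPolynomialJet_injective (hτ : τ ≠ 0) :
    Function.Injective (quasiPolynomialJet n τ s₀) := by
  rw [← LinearMap.ker_eq_bot, LinearMap.ker_eq_bot']
  rintro ⟨⟨p, hp⟩, ⟨q, hq⟩⟩ hpq
  have hjet (k : ℕ) (hk : k < 2 * n) : eval s₀ (derivative^[k] p) +
      Real.exp (-s₀ * τ) * eval s₀ ((twistedDerivative τ ^ k) q) = 0 := by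
    simpa [quasiPolynomialJet_apply] using congrFun hpq ⟨k, hk⟩
  rw [mem_degreeLT] at hp hq
  have hq0 : q = 0 := by
    suffices (twistedDerivative τ ^ n) q = 0 from
      (twistedDerivative_injective hτ).iterate n (by simpa [Module.End.pow_apply] using this)
    refine eq_zero_of_degree_lt_of_eval_twistedDerivative_pow_eq_zero (t := τ) (s₀ := s₀)
      ((degree_twistedDerivative_pow_le τ q n).trans_lt hq) fun j hj => ?_
    have hpj : derivative^[j + n] p = 0 :=
      iterate_derivative_eq_zero_of_degree_lt (hp.trans_le (by norm_cast; omega))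
    simpa [hpj, pow_add, Real.exp_ne_zero] using hjet (j + n) (by omega)
  have hp0 : p = 0 := by
    refine eq_zero_of_degree_lt_of_eval_iterate_derivative_eq_zero (s₀ := s₀) hp fun j hj => ?_
    simpa [hq0] using hjet j (by omega)
  simp [hp0, hq0]

variable {τ} in
lemma quasiPolynomialJet_bijective (hτ : τ ≠ 0) :
    Function.Bijective (quasiPolynomialJet n τ s₀) := by
  refine ⟨quasiPolynomialJet_injective n s₀ hτ, ?_⟩
  refine (LinearMap.injective_iff_surjective_of_finrank_eq_finrank ?_).mp
    (quasiPolynomialJet_injective n s₀ hτ)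
  simp [Module.finrank_prod, (degreeLTEquiv ℝ n).finrank_eq, two_mul]

lemma iteratedDeriv_quasiPolynomial_ofReal (ab : (Fin n → ℝ) × (Fin n → ℝ)) (k : Fin (2 * n)) :
    iteratedDeriv k
        (fun s : ℂ => s ^ n + (∑ i : Fin n, (ab.1 i : ℂ) * s ^ (i : ℕ)) +
          Complex.exp (-s * τ) * ∑ i : Fin n, (ab.2 i : ℂ) * s ^ (i : ℕ)) s₀ =
      ((eval s₀ (derivative^[k] (X ^ n)) + quasiPolynomialJet n τ s₀
        ((degreeLTEquiv ℝ n).symm.prodCongr (degreeLTEquiv ℝ n).symm ab) k : ℝ) : ℂ) := by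
  have := iteratedDeriv_aeval_add_cexp_mul_aeval_ofReal τ s₀
    (X ^ n + ((degreeLTEquiv ℝ n).symm ab.1 : ℝ[X])) ((degreeLTEquiv ℝ n).symm ab.2) k
  simp only [map_add, map_pow, aeval_X, aeval_degreeLTEquiv_symm, Complex.coe_algebraMap] at this
  rw [this, quasiPolynomialJet_apply, iterate_map_add, eval_add, add_assoc]
  rfl

end QuasiPolynomialJet

theorem exists_unique_coeffs_max_multiplicity_general (n : ℕ) (τ : ℝ)
    (hτ : 0 < τ) (s₀ : ℝ) :
    ∃! ab : (Fin n → ℝ) × (Fin n → ℝ), ∀ k < 2 * n,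
      iteratedDeriv k
        (fun s : ℂ => s ^ n + (∑ k : Fin n, (ab.1 k : ℂ) * s ^ (k : ℕ)) +
          Complex.exp (-s * τ) * ∑ k : Fin n, (ab.2 k : ℂ) * s ^ (k : ℕ))
        (s₀ : ℂ) = 0 := by
  let e := (degreeLTEquiv ℝ n).symm.prodCongr (degreeLTEquiv ℝ n).symm
  have hbij := (quasiPolynomialJet_bijective n s₀ hτ.ne').comp e.bijective
  refine (existsUnique_congr fun ab => ?_).mpr
    (hbij.existsUnique fun k => -eval s₀ (derivative^[k] (X ^ n)))
  rw [Function.comp_apply, funext_iff, Fin.forall_iff]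
  refine forall₂_congr fun k hk => ?_
  rw [iteratedDeriv_quasiPolynomial_ofReal n τ s₀ ab ⟨k, hk⟩, Complex.ofReal_eq_zero,
    eq_neg_iff_add_eq_zero, add_comm]

/-- Generic MID setting with `m = n - 1`: for a given `τ > 0` and `s₀ ∈ ℝ`,
there is a unique tuple of real coefficients `(a₀, …, a_{n-1}, b₀, …, b_{n-1})`
such that `Δ(s) = s^n + Σ_{k<n} a_k s^k + e^{-sτ} Σ_{k<n} b_k s^k` has `s₀` as
a root of multiplicity at least `2n`, i.e. `Δ^{(k)}(s₀) = 0` for all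
`0 ≤ k ≤ 2n - 1`. -/
theorem exists_unique_coeffs_max_multiplicity (n : ℕ) (hn : 1 ≤ n) (τ : ℝ)
    (hτ : 0 < τ) (s₀ : ℝ) :
    ∃! ab : (Fin n → ℝ) × (Fin n → ℝ), ∀ k < 2 * n,
      iteratedDeriv k
        (fun s : ℂ => s ^ n + (∑ k : Fin n, (ab.1 k : ℂ) * s ^ (k : ℕ)) +
          Complex.exp (-s * τ) * ∑ k : Fin n, (ab.2 k : ℂ) * s ^ (k : ℕ))
        (s₀ : ℂ) = 0 :=
  exists_unique_coeffs_max_multiplicity_general n τ hτ s₀
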